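/- There exists a soft e-topological space (X̃, τ, A) in which the only soft e-closed sets are the null and absolute soft sets (so every family of soft e-closed sets with null elementary intersection trivially has a finite subfamily with null elementary intersection), yet (X̃, τ, A) is not soft e-quasi-compact. Concretely: X = (1, ∞), A = [1, ∞), τ = {null soft set} ∪ {O_i | i ∈ [1,∞)} where O_i(α) = ((1 + iα)/(i + α), ∞); then τ is a soft e-topology, every O_i with i > 1 has relative complement not in S(X̃) (since O_i(1) = X), and the cover {O_i}_{i>1} of the absolute soft set admits no finite subcover. -/

import Mathlib

namespace SoftE

/-- A soft set over `X` with parameter set `A`. -/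
abbrev SoftSet (X A : Type*) := A → Set X

variable {X A : Type*}

/-- A soft element `x : A → X` belongs to a soft set `F`. -/
def smem (x : A → X) (F : SoftSet X A) : Prop := ∀ α, x α ∈ F α

/-- The soft set generated by a collection of soft elements. -/
def SS (B : Set (A → X)) : SoftSet X A := fun α => {a | ∃ x ∈ B, x α = a}

/-- The null soft set. -/
def nullSoft (X A : Type*) : SoftSet X A := fun _ => ∅

/-- The absolute soft set. -/
def absSoft (X A : Type*) : SoftSet X A := fun _ => Set.univ

/-- Membership in `S(X̃)`: empty at every parameter, or nonempty at every parameter. -/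
def InS (F : SoftSet X A) : Prop := (∀ α, F α = ∅) ∨ (∀ α, F α ≠ ∅)

/-- Soft subset: pointwise inclusion. -/
def softSubset (F G : SoftSet X A) : Prop := ∀ α, F α ⊆ G α

/-- Elementary union of a set of soft sets. -/
def eUnionSet (s : Set (SoftSet X A)) : SoftSet X A := SS {x | ∃ F ∈ s, smem x F}

/-- Elementary union of an indexed family of soft sets. -/
def eUnionFam {ι : Type*} (F : ι → SoftSet X A) : SoftSet X A := SS {x | ∃ i, smem x (F i)}

/-- Binary elementary union. -/
def eUnion2 (F G : SoftSet X A) : SoftSet X A := SS {x | smem x F ∨ smem x G}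

/-- Binary elementary intersection. -/
def eInter2 (F G : SoftSet X A) : SoftSet X A := SS {x | smem x F ∧ smem x G}

/-- Elementary intersection of an indexed family of soft sets. -/
def eInterFam {ι : Type*} (F : ι → SoftSet X A) : SoftSet X A := SS {x | ∀ i, smem x (F i)}

/-- Elementary complement of a soft set. -/
def eCompl (F : SoftSet X A) : SoftSet X A := SS {x | ∀ α, x α ∉ F α}

/-- Relative (pointwise) complement of a soft set. -/
def relCompl (F : SoftSet X A) : SoftSet X A := fun α => (F α)ᶜ

/-- Relative complement inside a subset `Y ⊆ X`. -/
def relComplIn (Y : Set X) (F : SoftSet X A) : SoftSet X A := fun α => Y \ F α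

/-- Elementary complement relative to `Y ⊆ X`. -/
def eComplIn (Y : Set X) (F : SoftSet X A) : SoftSet X A :=
  SS {x | ∀ α, x α ∈ Y \ F α}

/-- A soft e-topology on the soft set `B`. -/
def IsETopologyOn (B : SoftSet X A) (τ : Set (SoftSet X A)) : Prop :=
  (∀ F ∈ τ, InS F ∧ softSubset F B) ∧
  nullSoft X A ∈ τ ∧ B ∈ τ ∧
  (∀ s ⊆ τ, eUnionSet s ∈ τ) ∧
  (∀ F ∈ τ, ∀ G ∈ τ, eInter2 F G ∈ τ)

/-- A soft e-topology on the absolute soft set `(X̃, A)`. -/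
def IsETopology (τ : Set (SoftSet X A)) : Prop := IsETopologyOn (absSoft X A) τ

/-- Soft e-closed set. -/
def IsEClosed (τ : Set (SoftSet X A)) (F : SoftSet X A) : Prop :=
  InS F ∧ InS (relCompl F) ∧ eCompl F ∈ τ

/-- Soft e-Hausdorff property relative to a base soft set `B`. -/
def IsEHausdorffOn (B : SoftSet X A) (τ : Set (SoftSet X A)) : Prop :=
  ∀ x y : A → X, smem x B → smem y B → (∀ α, x α ≠ y α) →
    ∃ F ∈ τ, ∃ G ∈ τ, smem x F ∧ smem y G ∧ ∀ α, F α ∩ G α = ∅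

/-- Soft e-Hausdorff space. -/
def IsEHausdorff (τ : Set (SoftSet X A)) : Prop := IsEHausdorffOn (absSoft X A) τ

/-- Soft e-quasi-compactness relative to a base soft set `B`. -/
def IsEQuasiCompactOn (B : SoftSet X A) (τ : Set (SoftSet X A)) : Prop :=
  ∀ s ⊆ τ, eUnionSet s = B → ∃ t ⊆ s, t.Finite ∧ eUnionSet t = B

/-- Soft e-quasi-compact space. -/
def IsEQuasiCompact (τ : Set (SoftSet X A)) : Prop :=
  IsEQuasiCompactOn (absSoft X A) τ

/-- Soft e-compact set. -/
def IsECompactSet (τ : Set (SoftSet X A)) (K : SoftSet X A) : Prop :=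
  InS K ∧ InS (relCompl K) ∧
  ∀ s ⊆ τ, softSubset K (eUnionSet s) →
    ∃ t ⊆ s, t.Finite ∧ softSubset K (eUnionSet t)

/-- The subspace soft e-topology `τ_Y`. -/
def subTop (τ : Set (SoftSet X A)) (Y : Set X) : Set (SoftSet X A) :=
  {G | ∃ O ∈ τ, G = fun α => O α ∩ Y}

/-- Soft neighborhood of a soft element. -/
def IsNbd (τ : Set (SoftSet X A)) (x : A → X) (N : SoftSet X A) : Prop :=
  N ≠ nullSoft X A ∧ ∃ G ∈ τ, smem x G ∧ softSubset G N

/-- Soft interior of a soft set. -/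
def sInt (τ : Set (SoftSet X A)) (F : SoftSet X A) : SoftSet X A :=
  SS {x | smem x F ∧ ∃ G ∈ τ, smem x G ∧ softSubset G F}

end SoftE

open SoftE

/-! Every member of `τ` lies in `S(X̃)`, and for such soft sets the elementary union and
intersection are computed parameterwise. For `α ≥ 1` the endpoint `(1 + iα) / (i + α)` is
nondecreasing and continuous in `i`, so a union of the `O_i` over `i ∈ J` is `O` at `inf J`
and `O_i ∩ O_k = O_{max i k}`: hence `τ` is a soft e-topology. Since `O_i(1) = X` for all `i`,
a soft e-closed set that is neither null nor absolute would have as elementary complement its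
relative complement, a nonnull member of `τ`, forcing the set to be empty at the parameter `1`.
Finally `(O_i)_{i > 1}` covers `X̃` because its indices have infimum `1`, whereas a finite
subfamily has a least index `m > 1` and its union is `O_m ≠ O_1`. -/

namespace SoftE

open Set Topology

section General

variable {X A : Type*}

theorem exists_smem_eq {F : SoftSet X A} (hF : ∀ β, (F β).Nonempty) {α : A} {a : X}
    (ha : a ∈ F α) : ∃ x, smem x F ∧ x α = a := by
  classical
  choose y hy using hF
  refine ⟨Function.update y α a, fun β => ?_, Function.update_self ..⟩
  rcases eq_or_ne β α with rfl | hβ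
  · simpa
  · simpa [Function.update_of_ne hβ] using hy β

theorem SS_setOf_smem {F : SoftSet X A} (hF : InS F) : SS {x | smem x F} = F := by
  funext α
  ext a
  refine ⟨fun ⟨x, hx, hxa⟩ => hxa ▸ hx α, fun ha => ?_⟩
  rcases hF with hF | hF
  · exact absurd ha (by simp [hF α])
  · exact exists_smem_eq (fun β => nonempty_iff_ne_empty.2 (hF β)) ha

theorem eUnionSet_eq_biUnion {s : Set (SoftSet X A)} (hs : ∀ F ∈ s, InS F) :
    eUnionSet s = fun α => ⋃ F ∈ s, F α := by
  funext α
  ext a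
  simp only [mem_iUnion, exists_prop]
  constructor
  · rintro ⟨x, ⟨F, hF, hx⟩, rfl⟩
    exact ⟨F, hF, hx α⟩
  · rintro ⟨F, hF, ha⟩
    rw [← SS_setOf_smem (hs F hF)] at ha
    obtain ⟨x, hx, rfl⟩ := ha
    exact ⟨x, ⟨F, hF, hx⟩, rfl⟩

theorem eInter2_eq_inter {F G : SoftSet X A} (h : InS fun α => F α ∩ G α) :
    eInter2 F G = fun α => F α ∩ G α := by
  rw [← SS_setOf_smem h, eInter2]
  simp only [smem, mem_inter_iff, forall_and]

theorem isETopology_of_pointwise {τ : Set (SoftSet X A)} (hτ : ∀ F ∈ τ, InS F)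
    (hnull : nullSoft X A ∈ τ) (habs : absSoft X A ∈ τ)
    (hunion : ∀ s ⊆ τ, (fun α => ⋃ F ∈ s, F α) ∈ τ)
    (hinter : ∀ F ∈ τ, ∀ G ∈ τ, (fun α => F α ∩ G α) ∈ τ) : IsETopology τ := by
  refine ⟨fun F hF => ⟨hτ F hF, fun α => subset_univ _⟩, hnull, habs, fun s hs => ?_,
    fun F hF G hG => ?_⟩
  · rw [eUnionSet_eq_biUnion fun F hF => hτ F (hs hF)]
    exact hunion s hs
  · rw [eInter2_eq_inter (hτ _ (hinter F hF G hG))]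
    exact hinter F hF G hG

theorem eCompl_eq_SS (F : SoftSet X A) : eCompl F = SS {x | smem x (relCompl F)} := rfl

theorem IsEClosed.eq_nullSoft_or_eq_absSoft {τ : Set (SoftSet X A)} {α₀ : A}
    (hτ : ∀ G ∈ τ, G = nullSoft X A ∨ G α₀ = univ) {F : SoftSet X A} (hF : IsEClosed τ F) :
    F = nullSoft X A ∨ F = absSoft X A := by
  obtain ⟨hFS | hFS, hcS | hcS, hτF⟩ := hF
  · exact Or.inl (funext hFS)
  · exact Or.inl (funext hFS)
  · exact Or.inr (funext fun α => compl_empty_iff.1 (hcS α))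
  · rw [eCompl_eq_SS, SS_setOf_smem (Or.inr hcS)] at hτF
    rcases hτ _ hτF with h | h
    · exact absurd (congrFun h α₀) (hcS α₀)
    · exact absurd (compl_univ_iff.1 h) (hFS α₀)

end General

noncomputable def cutoff (i α : ℝ) : ℝ := (1 + i * α) / (i + α)

theorem cutoff_one_left {α : ℝ} (h : 1 + α ≠ 0) : cutoff 1 α = 1 := by
  rw [cutoff, one_mul, div_self h]

theorem cutoff_one_right {i : ℝ} (h : i + 1 ≠ 0) : cutoff i 1 = 1 := by
  rw [cutoff, mul_one, add_comm 1 i, div_self h]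

theorem cutoff_sub_cutoff {i j α : ℝ} (hi : i + α ≠ 0) (hj : j + α ≠ 0) :
    cutoff i α - cutoff j α = (i - j) * (α ^ 2 - 1) / ((i + α) * (j + α)) := by
  rw [cutoff, cutoff]
  field_simp
  ring

theorem monotoneOn_cutoff {α : ℝ} (hα : 1 ≤ α) : MonotoneOn (cutoff · α) (Ioi (-α)) := by
  intro j hj i hi hji
  have hj : 0 < j + α := by linarith [mem_Ioi.1 hj]
  have hi : 0 < i + α := by linarith [mem_Ioi.1 hi]
  have hdiff := cutoff_sub_cutoff hi.ne' hj.ne'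
  have : 0 ≤ (i - j) * (α ^ 2 - 1) / ((i + α) * (j + α)) :=
    div_nonneg (mul_nonneg (by linarith) (by nlinarith)) (by positivity)
  linarith

theorem strictMonoOn_cutoff {α : ℝ} (hα : 1 < α) : StrictMonoOn (cutoff · α) (Ioi (-α)) := by
  intro j hj i hi hji
  have hj : 0 < j + α := by linarith [mem_Ioi.1 hj]
  have hi : 0 < i + α := by linarith [mem_Ioi.1 hi]
  have hdiff := cutoff_sub_cutoff hi.ne' hj.ne'
  have : 0 < (i - j) * (α ^ 2 - 1) / ((i + α) * (j + α)) :=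
    div_pos (mul_pos (by linarith) (by nlinarith)) (by positivity)
  linarith

theorem one_le_cutoff {i α : ℝ} (hi : 1 ≤ i) (hα : 1 ≤ α) : 1 ≤ cutoff i α := by
  rw [← cutoff_one_left (by linarith : 1 + α ≠ 0)]
  exact monotoneOn_cutoff hα (mem_Ioi.2 (by linarith)) (mem_Ioi.2 (by linarith)) hi

theorem continuousAt_cutoff {i α : ℝ} (h : i + α ≠ 0) : ContinuousAt (cutoff · α) i := by
  unfold cutoff
  fun_prop (disch := exact h)

theorem exists_cutoff_lt_iff {I : Set ℝ} (hne : I.Nonempty) (hbdd : BddBelow I) {α a : ℝ}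
    (hα : 1 ≤ α) (hI : -α < sInf I) : (∃ i ∈ I, cutoff i α < a) ↔ cutoff (sInf I) α < a := by
  constructor
  · rintro ⟨i, hi, hia⟩
    have hle := csInf_le hbdd hi
    exact (monotoneOn_cutoff hα hI (hI.trans_le hle) hle).trans_lt hia
  · intro h
    have hU : {i | cutoff i α < a} ∈ 𝓝 (sInf I) :=
      (continuousAt_cutoff (by linarith)).preimage_mem_nhds (isOpen_Iio.mem_nhds h)
    obtain ⟨i, hia, hi⟩ := mem_closure_iff_nhds.1 (csInf_mem_closure hne hbdd) _ hU
    exact ⟨i, hi, hia⟩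

end SoftE

namespace SoftE.CutoffExample

open Set

abbrev X : Type := {x : ℝ // 1 < x}

abbrev A : Type := {a : ℝ // 1 ≤ a}

instance : One A := ⟨⟨1, le_rfl⟩⟩

@[simp] theorem coe_one : ((1 : A) : ℝ) = 1 := rfl

def O (i α : A) : Set X := {x | cutoff i.1 α.1 < x.1}

def τ : Set (SoftSet X A) := insert (nullSoft X A) (range O)

theorem coe_mem_Ioi_neg (i α : A) : i.1 ∈ Ioi (-α.1) := mem_Ioi.2 (by linarith [i.2, α.2])

theorem image_val_O (i α : A) : Subtype.val '' O i α = Ioi (cutoff i.1 α.1) := by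
  ext c
  refine ⟨fun ⟨x, hx, hxc⟩ => hxc ▸ hx, fun hc => ⟨⟨c, ?_⟩, hc, rfl⟩⟩
  exact (one_le_cutoff i.2 α.2).trans_lt hc

theorem O_nonempty (i α : A) : (O i α).Nonempty :=
  image_nonempty.1 ((image_val_O i α).symm ▸ nonempty_Ioi)

theorem O_apply_one (i : A) : O i 1 = univ := by
  refine eq_univ_of_forall fun x => ?_
  change cutoff i.1 1 < x.1
  rw [cutoff_one_right (by linarith [i.2])]
  exact x.2

theorem O_one : O 1 = absSoft X A := by
  funext α
  refine eq_univ_of_forall fun x => ?_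
  change cutoff 1 α.1 < x.1
  rw [cutoff_one_left (by linarith [α.2])]
  exact x.2

theorem O_antitone {i k : A} (h : i ≤ k) (α : A) : O k α ⊆ O i α := fun _ hx =>
  (monotoneOn_cutoff α.2 (coe_mem_Ioi_neg i α) (coe_mem_Ioi_neg k α) h).trans_lt hx

theorem O_injective : Function.Injective O := by
  intro i k h
  have hcut := congrArg (Subtype.val '' ·) (congrFun h ⟨2, one_le_two⟩)
  simp only [image_val_O, Ioi_inj] at hcut
  exact Subtype.ext <| (strictMonoOn_cutoff one_lt_two).injOn
    (coe_mem_Ioi_neg i ⟨2, one_le_two⟩) (coe_mem_Ioi_neg k ⟨2, one_le_two⟩) hcut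

theorem biUnion_O_eq {J : Set A} (hJ : J.Nonempty) {j : A}
    (hj : j.1 = sInf (Subtype.val '' J)) : (fun α => ⋃ i ∈ J, O i α) = O j := by
  have hbdd : BddBelow (Subtype.val '' J) := ⟨1, by rintro _ ⟨i, -, rfl⟩; exact i.2⟩
  funext α
  ext x
  simp only [O, mem_iUnion, mem_ofPred_eq, exists_prop, hj]
  rw [← exists_cutoff_lt_iff (hJ.image _) hbdd α.2 (by linarith [hj ▸ j.2, α.2]),
    exists_mem_image]

theorem biUnion_O_mem_τ (J : Set A) : (fun α => ⋃ i ∈ J, O i α) ∈ τ := by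
  rcases J.eq_empty_or_nonempty with rfl | hJ
  · exact Or.inl (funext fun α => biUnion_empty _)
  · have hinf : 1 ≤ sInf (Subtype.val '' J) :=
      le_csInf (hJ.image _) (by rintro _ ⟨i, -, rfl⟩; exact i.2)
    exact Or.inr ⟨_, (biUnion_O_eq hJ (j := ⟨_, hinf⟩) rfl).symm⟩

theorem inS_of_mem_τ {F : SoftSet X A} (hF : F ∈ τ) : InS F := by
  rcases hF with rfl | ⟨i, rfl⟩
  · exact Or.inl fun _ => rfl
  · exact Or.inr fun α => (O_nonempty i α).ne_empty

theorem biUnion_eq_biUnion_preimage_O {s : Set (SoftSet X A)} (hs : s ⊆ τ) (α : A) :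
    ⋃ F ∈ s, F α = ⋃ i ∈ O ⁻¹' s, O i α := by
  ext x
  simp only [mem_iUnion, mem_preimage, exists_prop]
  constructor
  · rintro ⟨F, hF, hx⟩
    rcases hs hF with rfl | ⟨i, rfl⟩
    · exact absurd hx (notMem_empty x)
    · exact ⟨i, hF, hx⟩
  · rintro ⟨i, hi, hx⟩
    exact ⟨O i, hi, hx⟩

theorem eUnionSet_eq_biUnion_O {s : Set (SoftSet X A)} (hs : s ⊆ τ) :
    eUnionSet s = fun α => ⋃ i ∈ O ⁻¹' s, O i α := by
  rw [eUnionSet_eq_biUnion fun F hF => inS_of_mem_τ (hs hF)]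
  exact funext (biUnion_eq_biUnion_preimage_O hs)

theorem isETopology_τ : IsETopology τ := by
  refine isETopology_of_pointwise (fun F => inS_of_mem_τ) (mem_insert _ _)
    (Or.inr ⟨1, O_one⟩) (fun s hs => ?_) ?_
  · simp_rw [biUnion_eq_biUnion_preimage_O hs]
    exact biUnion_O_mem_τ _
  · rintro F (rfl | ⟨i, rfl⟩) G (rfl | ⟨k, rfl⟩)
    · exact Or.inl (funext fun α => empty_inter _)
    · exact Or.inl (funext fun α => empty_inter _)
    · exact Or.inl (funext fun α => inter_empty _)
    rcases le_total i k with h | h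
    · exact Or.inr ⟨k, funext fun α => (inter_eq_right.2 (O_antitone h α)).symm⟩
    · exact Or.inr ⟨i, funext fun α => (inter_eq_left.2 (O_antitone h α)).symm⟩

theorem eq_nullSoft_or_apply_one_eq_univ {G : SoftSet X A} (hG : G ∈ τ) :
    G = nullSoft X A ∨ G 1 = univ := by
  rcases hG with rfl | ⟨i, rfl⟩
  · exact Or.inl rfl
  · exact Or.inr (O_apply_one i)

theorem not_isEQuasiCompact_τ : ¬ IsEQuasiCompact τ := by
  intro hqc
  set J : Set A := {i | 1 < i.1}
  have hsτ : O '' J ⊆ τ := (image_subset_range _ _).trans (subset_insert _ _)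
  have hcover : eUnionSet (O '' J) = absSoft X A := by
    have hJ : Subtype.val '' J = Ioi 1 :=
      Subset.antisymm (by rintro _ ⟨i, hi, rfl⟩; exact hi) fun c hc => ⟨⟨c, hc.le⟩, hc, rfl⟩
    rw [eUnionSet_eq_biUnion_O hsτ, preimage_image_eq _ O_injective, ← O_one]
    exact biUnion_O_eq ⟨⟨2, one_le_two⟩, show (1 : ℝ) < 2 from one_lt_two⟩
      (by rw [hJ, csInf_Ioi, coe_one])
  obtain ⟨t, hts, htfin, htcover⟩ := hqc _ hsτ hcover
  set K := O ⁻¹' t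
  have hKJ : K ⊆ J := fun i hi => O_injective.mem_set_image.1 (hts hi)
  rw [eUnionSet_eq_biUnion_O (hts.trans hsτ)] at htcover
  rcases K.eq_empty_or_nonempty with hK | hK
  · have hx : (⟨2, one_lt_two⟩ : X) ∈ ⋃ i ∈ K, O i 1 := by
      rw [congrFun htcover 1]
      trivial
    simp [hK] at hx
  · obtain ⟨m, hmK, hm⟩ := (hK.image Subtype.val).csInf_mem
      ((htfin.preimage O_injective.injOn).image _)
    rw [biUnion_O_eq hK hm, ← O_one] at htcover
    exact (hKJ hmK).ne' (congrArg Subtype.val (O_injective htcover))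

end SoftE.CutoffExample

/-- a soft e-topological space whose only soft e-closed sets are
the null and absolute soft sets, yet which is not soft e-quasi-compact. -/
theorem stmt17 :
    letI X : Type := {x : ℝ // 1 < x}
    letI A : Type := {a : ℝ // 1 ≤ a}
    letI O : A → SoftSet X A :=
      fun i α => {x : X | (1 + i.1 * α.1) / (i.1 + α.1) < x.1}
    letI τ : Set (SoftSet X A) := insert (nullSoft X A) (Set.range O)
    IsETopology τ ∧
      (∀ F : SoftSet X A, IsEClosed τ F →
        F = nullSoft X A ∨ F = absSoft X A) ∧
      ¬ IsEQuasiCompact τ :=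
  ⟨CutoffExample.isETopology_τ,
    fun _ hF => hF.eq_nullSoft_or_eq_absSoft fun _ =>
      CutoffExample.eq_nullSoft_or_apply_one_eq_univ,
    CutoffExample.not_isEQuasiCompact_τ⟩
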